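/- Let a : ℝ → ℝ be continuous with |a(t)| ≤ a₀ for all t, and let x, v : ℝ → ℝ be differentiable functions satisfying the time-reversed system x'(t) = −v(t), v'(t) = −(a(t) − (1/4)v(t) + x(t) − x(t)² − x(t)³) on [0, T]. Then, writing Vmin = V((−1−√5)/2) for the global minimum of the potential, the energy satisfies (d/dt)E(x(t), v(t)) = (1/4)v(t)² − a(t)v(t) ≤ (3/2)(E(x(t), v(t)) − Vmin) + a₀²/2 for all t ∈ [0, T]. -/

import Mathlib

/-- The potential of the oscillator. -/
noncomputable def V (x : ℝ) : ℝ := x ^ 4 / 4 + x ^ 3 / 3 - x ^ 2 / 2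

/-- The energy of the oscillator. -/
noncomputable def E (x v : ℝ) : ℝ := v ^ 2 / 2 + V x

/-!
Differentiating `E = v²/2 + V(x)` along the time-reversed flow, the conservative terms cancel and
only the damping and forcing contribute: `dE/dt = v²/4 - a v`. By `-a v ≤ v²/2 + a₀²/2` this is at
most `(3/4) v² + a₀²/2`, and `v²/2 ≤ E - Vmin` because `Vmin` is the global minimum of `V`. That
minimum is seen from the factorisation of `V y - V r` at a critical point `r` with `r² + r = 1`.
-/

lemma V_sub_eq_of_sq_add_self_eq_one {r : ℝ} (hr : r ^ 2 + r = 1) (y : ℝ) :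
    V y - V r = (y - r) ^ 2 * ((y / 2 + 1 / 3 + r / 2) ^ 2 - (1 / 9 + r / 6)) := by
  unfold V
  linear_combination (y ^ 2 - r ^ 2) / 2 * hr

lemma V_le_of_sq_add_self_eq_one {r : ℝ} (hr : r ^ 2 + r = 1) (hr' : r ≤ -2 / 3) (y : ℝ) :
    V r ≤ V y := by
  rw [← sub_nonneg, V_sub_eq_of_sq_add_self_eq_one hr y]
  exact mul_nonneg (sq_nonneg _) (by linarith [sq_nonneg (y / 2 + 1 / 3 + r / 2)])

lemma V_min_le (y : ℝ) : V ((-1 - √5) / 2) ≤ V y := by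
  have h5 : √5 ^ 2 = 5 := Real.sq_sqrt (by norm_num)
  refine V_le_of_sq_add_self_eq_one (by linear_combination h5 / 4) ?_ y
  nlinarith [Real.sqrt_nonneg 5]

lemma hasDerivAt_V (y : ℝ) : HasDerivAt V (y ^ 3 + y ^ 2 - y) y := by
  have h := (((hasDerivAt_pow 4 y).div_const 4).add ((hasDerivAt_pow 3 y).div_const 3)).sub
    ((hasDerivAt_pow 2 y).div_const 2)
  exact h.congr_deriv (by norm_num)

lemma HasDerivAt.energy {x v : ℝ → ℝ} {x' v' t : ℝ} (hx : HasDerivAt x x' t)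
    (hv : HasDerivAt v v' t) :
    HasDerivAt (fun s => E (x s) (v s)) (v t * v' + (x t ^ 3 + x t ^ 2 - x t) * x') t := by
  have h := ((hv.pow 2).div_const 2).add ((hasDerivAt_V (x t)).comp t hx)
  refine h.congr_deriv ?_
  norm_num
  ring

lemma damping_sub_forcing_le {α a₀ : ℝ} (hα : |α| ≤ a₀) (w : ℝ) :
    (1 / 4) * w ^ 2 - α * w ≤ (3 / 2) * (w ^ 2 / 2) + a₀ ^ 2 / 2 := by
  have hsq : α ^ 2 ≤ a₀ ^ 2 := sq_le_sq' (abs_le.mp hα).1 (abs_le.mp hα).2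
  nlinarith [sq_nonneg (w + α)]

lemma sq_div_two_le_E_sub_Vmin (y w : ℝ) : w ^ 2 / 2 ≤ E y w - V ((-1 - √5) / 2) := by
  unfold E
  linarith [V_min_le y]

theorem stmt_11_general (a : ℝ → ℝ) (a₀ T : ℝ)
    (hbound : ∀ t, |a t| ≤ a₀)
    (x v : ℝ → ℝ) (hx : Differentiable ℝ x) (hv : Differentiable ℝ v)
    (hode : ∀ t ∈ Set.Icc (0 : ℝ) T, deriv x t = -(v t) ∧
      deriv v t = -(a t - (1/4 : ℝ) * v t + x t - (x t) ^ 2 - (x t) ^ 3)) :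
    ∀ t ∈ Set.Icc (0 : ℝ) T,
      HasDerivAt (fun s => E (x s) (v s)) ((1/4 : ℝ) * (v t) ^ 2 - a t * v t) t ∧
      (1/4 : ℝ) * (v t) ^ 2 - a t * v t ≤
        (3/2 : ℝ) * (E (x t) (v t) - V ((-1 - Real.sqrt 5) / 2)) + a₀ ^ 2 / 2 := by
  intro t ht
  obtain ⟨hx', hv'⟩ := hode t ht
  constructor
  · have h := (hx t).hasDerivAt.energy (hv t).hasDerivAt
    rw [hx', hv'] at h
    convert h using 1
    ring
  · calc (1/4 : ℝ) * (v t) ^ 2 - a t * v t ≤ (3 / 2) * (v t ^ 2 / 2) + a₀ ^ 2 / 2 :=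
          damping_sub_forcing_le (hbound t) (v t)
      _ ≤ (3/2 : ℝ) * (E (x t) (v t) - V ((-1 - Real.sqrt 5) / 2)) + a₀ ^ 2 / 2 := by
          gcongr
          exact sq_div_two_le_E_sub_Vmin (x t) (v t)

/-- Along the time-reversed forced oscillator
`ẋ = -v, v̇ = -(a(t) - (1/4)v + x - x² - x³)` with `|a(t)| ≤ a₀`, the energy
has derivative `(1/4)v² - a·v`, which is bounded by the Grönwall-type estimate
`(3/2)(E - Vmin) + a₀²/2`, where `Vmin = V((-1-√5)/2)`. -/
theorem stmt_11 (a : ℝ → ℝ) (a₀ T : ℝ) (ha : Continuous a)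
    (hbound : ∀ t, |a t| ≤ a₀)
    (x v : ℝ → ℝ) (hx : Differentiable ℝ x) (hv : Differentiable ℝ v)
    (hode : ∀ t ∈ Set.Icc (0 : ℝ) T, deriv x t = -(v t) ∧
      deriv v t = -(a t - (1/4 : ℝ) * v t + x t - (x t) ^ 2 - (x t) ^ 3)) :
    ∀ t ∈ Set.Icc (0 : ℝ) T,
      HasDerivAt (fun s => E (x s) (v s)) ((1/4 : ℝ) * (v t) ^ 2 - a t * v t) t ∧
      (1/4 : ℝ) * (v t) ^ 2 - a t * v t ≤
        (3/2 : ℝ) * (E (x t) (v t) - V ((-1 - Real.sqrt 5) / 2)) + a₀ ^ 2 / 2 :=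
  stmt_11_general a a₀ T hbound x v hx hv hode
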